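/- In the partial crossed product H_ss # H4 arising from the twisted partial action, the elements 1#1, e1#1, e2#1, e3#1, 1#gv, e1#gv, e2#gv, e3#gv form a basis of the vector space H_ss #_(·,ω) H4 = (H_ss ⊗ H4)(1 ⊗ 1); in particular this crossed product has dimension 8. -/

import Mathlib

/-!
On the basis of `H₄` one computes `a ♯ 1 = a ⊗ 1`, `a ♯ g = 0`, `a ♯ ν = (a ω(1,ν)) ♯ 1` and
`a ♯ gν = a ⊗ gν + (a ω(1,gν)) ⊗ g`. Hence the crossed product is the image of
`(a, b) ↦ a ♯ 1 + b ♯ gν` on `H_ss × H_ss`, and this map is injective because the `1`- and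
`gν`-coordinates of `a ♯ 1 + b ♯ gν` are `a` and `b`. The eight given elements are the images of
the standard basis of `H_ss × H_ss`.
-/

open Quaternion TensorProduct

noncomputable section

/-- Sweedler's Hopf algebra `H₄` as a vector space over `ℝ`,
with basis `1, g, ν, gν` indexed by `Fin 4`. -/
abbrev H4 := Fin 4 → ℝ

namespace H4

/-- The canonical basis `1, g, ν, gν` of Sweedler's Hopf algebra. -/
def B : Module.Basis (Fin 4) ℝ H4 := Pi.basisFun ℝ (Fin 4)

/-- The unit `1` of `H₄`. -/
def u : H4 := B 0
/-- The grouplike element `g` of `H₄`. -/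
def g : H4 := B 1
/-- The element `ν` of `H₄`. -/
def v : H4 := B 2
/-- The element `gν` of `H₄`. -/
def w : H4 := B 3

/-- The multiplication of Sweedler's Hopf algebra, as a bilinear map:
`g² = 1`, `ν² = 0`, `gν = -νg`. -/
def mul4 : H4 →ₗ[ℝ] H4 →ₗ[ℝ] H4 :=
  B.constr ℝ ![B.constr ℝ ![u, g, v, w],
               B.constr ℝ ![g, u, w, v],
               B.constr ℝ ![v, -w, 0, 0],
               B.constr ℝ ![w, -v, 0, 0]]

/-- The comultiplication of Sweedler's Hopf algebra:
`Δ(1) = 1⊗1`, `Δ(g) = g⊗g`, `Δ(ν) = g⊗ν + ν⊗1`, `Δ(gν) = 1⊗gν + gν⊗g`. -/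
def Δ : H4 →ₗ[ℝ] H4 ⊗[ℝ] H4 :=
  B.constr ℝ ![u ⊗ₜ u, g ⊗ₜ g, g ⊗ₜ v + v ⊗ₜ u, u ⊗ₜ w + w ⊗ₜ g]

end H4

/-- The split semi-quaternion algebra `H_ss`:
`e1² = 1`, `e2² = 0`, `e3² = 0`, `e1e2 = e3 = -e2e1`,
`e2e3 = 0 = -e3e2`, `e3e1 = -e2 = -e1e3`. -/
abbrev Hss := ℍ[ℝ, 1, 0]

namespace Hss
def e1 : Hss := ⟨0, 1, 0, 0⟩
def e2 : Hss := ⟨0, 0, 1, 0⟩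
def e3 : Hss := ⟨0, 0, 0, 1⟩
/-- The basis `1, e1, e2, e3` of the split semi-quaternion algebra. -/
def Qb : Module.Basis (Fin 4) ℝ Hss := QuaternionAlgebra.basisOneIJK 1 0 0
end Hss

variable (k1 k2 k3 k4 l1 l2 l3 l4 : ℝ)

/-- The value `ν · 1 = ω(1,ν) = ω(ν,1) = k₁ + k₂e₁ + k₃e₂ - k₄e₃`. -/
def nu1 : Hss := k1 • 1 + k2 • Hss.e1 + k3 • Hss.e2 - k4 • Hss.e3

/-- The value `gν · 1 = ω(1,gν) = ω(gν,1) = l₁ + l₂e₁ + l₃e₂ + l₄e₃`. -/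
def gnu1 : Hss := l1 • 1 + l2 • Hss.e1 + l3 • Hss.e2 + l4 • Hss.e3

/-- The partial action `· : H₄ ⊗ H_ss → H_ss` from the paper:
`1` acts as the identity, `g · x = 0`, and `ν`, `gν` act via the parameters
`k₁,…,k₄,l₁,…,l₄` as in the table. -/
def actSS : H4 →ₗ[ℝ] Hss →ₗ[ℝ] Hss :=
  H4.B.constr ℝ
    ![LinearMap.id, 0,
      Hss.Qb.constr ℝ
        ![nu1 k1 k2 k3 k4,
          k2 • 1 + k1 • Hss.e1 + k4 • Hss.e2 - k3 • Hss.e3,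
          k1 • Hss.e2 + k2 • Hss.e3,
          k2 • Hss.e2 + k1 • Hss.e3],
      Hss.Qb.constr ℝ
        ![gnu1 l1 l2 l3 l4,
          l2 • 1 + l1 • Hss.e1 + l4 • Hss.e2 + l3 • Hss.e3,
          l1 • Hss.e2 - l2 • Hss.e3,
          -l2 • Hss.e2 + l1 • Hss.e3]]

/-- The value `ω(ν,ν) = (k₁²+k₂²) + 2k₁k₂e₁ + 2k₁k₃e₂ - 2k₁k₄e₃`. -/
def omvv : Hss :=
  (k1 ^ 2 + k2 ^ 2) • 1 + (2 * k1 * k2) • Hss.e1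
    + (2 * k1 * k3) • Hss.e2 - (2 * k1 * k4) • Hss.e3

/-- The value `ω(ν,gν) = ω(gν,ν)`. -/
def omvw : Hss :=
  (k1 * l1 + k2 * l2) • 1 + (k2 * l1 + k1 * l2) • Hss.e1
    + (k3 * l1 + k4 * l2 + k1 * l3 + k2 * l4) • Hss.e2
    + (-(k4 * l1) - k3 * l2 + k2 * l3 + k1 * l4) • Hss.e3

/-- The cocycle `ω : H₄ ⊗ H₄ → H_ss` from the paper's table. -/
def omSS : H4 →ₗ[ℝ] H4 →ₗ[ℝ] Hss :=
  H4.B.constr ℝ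
    ![H4.B.constr ℝ ![1, 0, nu1 k1 k2 k3 k4, gnu1 l1 l2 l3 l4],
      0,
      H4.B.constr ℝ ![nu1 k1 k2 k3 k4, 0, omvv k1 k2 k3 k4,
        omvw k1 k2 k3 k4 l1 l2 l3 l4],
      H4.B.constr ℝ ![gnu1 l1 l2 l3 l4, 0,
        omvw k1 k2 k3 k4 l1 l2 l3 l4, 0]]

/-- The map `h ↦ (h₁·1) ⊗ h₂` of `H₄` into `H_ss ⊗ H₄`. -/
def sharpAux : H4 →ₗ[ℝ] Hss ⊗[ℝ] H4 :=
  (TensorProduct.map ((actSS k1 k2 k3 k4 l1 l2 l3 l4).flip 1) LinearMap.id) ∘ₗ H4.Δ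

/-- The bilinear map `(a, h) ↦ a ♯ h = a(h₁·1) ⊗ h₂` defining the elements of the
partial crossed product `H_ss ♯ H₄ = (H_ss ⊗ H₄)(1 ⊗ 1)`. -/
def sharpSS : Hss →ₗ[ℝ] H4 →ₗ[ℝ] Hss ⊗[ℝ] H4 :=
  ((LinearMap.llcomp ℝ H4 (Hss ⊗[ℝ] H4) (Hss ⊗[ℝ] H4)).flip
      (sharpAux k1 k2 k3 k4 l1 l2 l3 l4)) ∘ₗ
    LinearMap.rTensorHom H4 ∘ₗ LinearMap.mul ℝ Hss

lemma Hss.coe_Qb : ⇑Hss.Qb = ![1, Hss.e1, Hss.e2, Hss.e3] := by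
  funext i
  apply Hss.Qb.repr.injective
  fin_cases i <;> ext j <;> fin_cases j <;>
    simp [Hss.Qb, QuaternionAlgebra.coe_basisOneIJK_repr, Hss.e1, Hss.e2, Hss.e3]

lemma Hss.Qb_zero : Hss.Qb 0 = 1 := by simp [Hss.coe_Qb]

def Hss.pairBasis : Module.Basis (Fin 8) ℝ (Hss × Hss) :=
  (Hss.Qb.prod Hss.Qb).reindex finSumFinEquiv

lemma H4.Δ_u : H4.Δ H4.u = H4.u ⊗ₜ H4.u := by simp [H4.Δ, H4.u]
lemma H4.Δ_g : H4.Δ H4.g = H4.g ⊗ₜ H4.g := by simp [H4.Δ, H4.g]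
lemma H4.Δ_v : H4.Δ H4.v = H4.g ⊗ₜ H4.v + H4.v ⊗ₜ H4.u := by simp [H4.Δ, H4.v]
lemma H4.Δ_w : H4.Δ H4.w = H4.u ⊗ₜ H4.w + H4.w ⊗ₜ H4.g := by simp [H4.Δ, H4.w]

def TensorProduct.evalPair {R M ι : Type*} [CommSemiring R] [AddCommMonoid M] [Module R M]
    (i j : ι) : M ⊗[R] (ι → R) →ₗ[R] M × M :=
  (TensorProduct.rid R M ∘ₗ LinearMap.lTensor M (LinearMap.proj i)).prod
    (TensorProduct.rid R M ∘ₗ LinearMap.lTensor M (LinearMap.proj j))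

@[simp]
lemma TensorProduct.evalPair_tmul {R M ι : Type*} [CommSemiring R] [AddCommMonoid M]
    [Module R M] (i j : ι) (x : M) (h : ι → R) :
    TensorProduct.evalPair i j (x ⊗ₜ[R] h) = (h i • x, h j • x) := by
  simp [TensorProduct.evalPair]

section CrossedProduct

local notation:70 a:71 " ♯ " h:71 => sharpSS k1 k2 k3 k4 l1 l2 l3 l4 a h

lemma actSS_u : actSS k1 k2 k3 k4 l1 l2 l3 l4 H4.u = LinearMap.id := by
  simp [H4.u, actSS]

lemma actSS_g : actSS k1 k2 k3 k4 l1 l2 l3 l4 H4.g = 0 := by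
  simp [H4.g, actSS]

lemma actSS_v_one : actSS k1 k2 k3 k4 l1 l2 l3 l4 H4.v 1 = nu1 k1 k2 k3 k4 := by
  rw [← Hss.Qb_zero]
  simp [H4.v, actSS]

lemma actSS_w_one : actSS k1 k2 k3 k4 l1 l2 l3 l4 H4.w 1 = gnu1 l1 l2 l3 l4 := by
  rw [← Hss.Qb_zero]
  simp [H4.w, actSS]

lemma sharpSS_u (a : Hss) : a ♯ H4.u = a ⊗ₜ H4.u := by
  simp [sharpSS, sharpAux, H4.Δ_u, actSS_u]

lemma sharpSS_g (a : Hss) : a ♯ H4.g = 0 := by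
  simp [sharpSS, sharpAux, H4.Δ_g, actSS_g]

lemma sharpSS_v (a : Hss) : a ♯ H4.v = (a * nu1 k1 k2 k3 k4) ♯ H4.u := by
  simp [sharpSS, sharpAux, H4.Δ_u, H4.Δ_v, actSS_u, actSS_g, actSS_v_one]

lemma sharpSS_w (a : Hss) : a ♯ H4.w = a ⊗ₜ H4.w + (a * gnu1 l1 l2 l3 l4) ⊗ₜ H4.g := by
  simp [sharpSS, sharpAux, H4.Δ_w, actSS_u, actSS_w_one]

def sharpPair : Hss × Hss →ₗ[ℝ] Hss ⊗[ℝ] H4 :=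
  ((sharpSS k1 k2 k3 k4 l1 l2 l3 l4).flip H4.u).coprod
    ((sharpSS k1 k2 k3 k4 l1 l2 l3 l4).flip H4.w)

lemma sharpPair_leftInverse :
    Function.LeftInverse (TensorProduct.evalPair 0 3) (sharpPair k1 k2 k3 k4 l1 l2 l3 l4) := by
  rintro ⟨a, b⟩
  simp only [sharpPair, LinearMap.coprod_apply, LinearMap.flip_apply, sharpSS_u, sharpSS_w,
    map_add, TensorProduct.evalPair_tmul]
  simp [H4.u, H4.w, H4.g, H4.B]

lemma range_sharpPair : LinearMap.range (sharpPair k1 k2 k3 k4 l1 l2 l3 l4) =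
    Submodule.span ℝ {x : Hss ⊗[ℝ] H4 | ∃ (a : Hss) (h : H4), x = a ♯ h} := by
  apply le_antisymm
  · rintro _ ⟨⟨a, b⟩, rfl⟩
    exact add_mem (Submodule.subset_span ⟨a, _, rfl⟩) (Submodule.subset_span ⟨b, _, rfl⟩)
  rw [Submodule.span_le]
  rintro _ ⟨a, h, rfl⟩
  have mem_u (b : Hss) : b ♯ H4.u ∈ LinearMap.range (sharpPair k1 k2 k3 k4 l1 l2 l3 l4) :=
    ⟨(b, 0), by simp [sharpPair]⟩
  have mem_w (b : Hss) : b ♯ H4.w ∈ LinearMap.range (sharpPair k1 k2 k3 k4 l1 l2 l3 l4) :=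
    ⟨(0, b), by simp [sharpPair]⟩
  suffices LinearMap.range (sharpSS k1 k2 k3 k4 l1 l2 l3 l4 a) ≤
      LinearMap.range (sharpPair k1 k2 k3 k4 l1 l2 l3 l4) from this ⟨h, rfl⟩
  rw [LinearMap.range_eq_map, ← H4.B.span_eq, Submodule.map_span_le]
  rintro _ ⟨i, rfl⟩
  fin_cases i
  · exact mem_u a
  · change a ♯ H4.g ∈ _
    rw [sharpSS_g]
    exact zero_mem _
  · change a ♯ H4.v ∈ _
    rw [sharpSS_v]
    exact mem_u _
  · exact mem_w a

lemma sharpPair_comp_pairBasis : ⇑(sharpPair k1 k2 k3 k4 l1 l2 l3 l4) ∘ ⇑Hss.pairBasis =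
    ![1 ♯ H4.u, Hss.e1 ♯ H4.u, Hss.e2 ♯ H4.u, Hss.e3 ♯ H4.u,
      1 ♯ H4.w, Hss.e1 ♯ H4.w, Hss.e2 ♯ H4.w, Hss.e3 ♯ H4.w] := by
  funext i
  fin_cases i <;> simp [Hss.pairBasis, sharpPair, Hss.coe_Qb, finSumFinEquiv, Fin.addCases]

end CrossedProduct

/-- The elements `1♯1, e₁♯1, e₂♯1, e₃♯1, 1♯gν, e₁♯gν, e₂♯gν, e₃♯gν`
form a basis of the partial crossed product `H_ss ♯ H₄`, the span of all `a ♯ h`;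
in particular it has dimension 8. -/
theorem sharpSS_basis :
    LinearIndependent ℝ
      ![(sharpSS k1 k2 k3 k4 l1 l2 l3 l4) 1 H4.u, (sharpSS k1 k2 k3 k4 l1 l2 l3 l4) Hss.e1 H4.u, (sharpSS k1 k2 k3 k4 l1 l2 l3 l4) Hss.e2 H4.u, (sharpSS k1 k2 k3 k4 l1 l2 l3 l4) Hss.e3 H4.u,
        (sharpSS k1 k2 k3 k4 l1 l2 l3 l4) 1 H4.w, (sharpSS k1 k2 k3 k4 l1 l2 l3 l4) Hss.e1 H4.w, (sharpSS k1 k2 k3 k4 l1 l2 l3 l4) Hss.e2 H4.w, (sharpSS k1 k2 k3 k4 l1 l2 l3 l4) Hss.e3 H4.w] ∧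
    Submodule.span ℝ (Set.range
      ![(sharpSS k1 k2 k3 k4 l1 l2 l3 l4) 1 H4.u, (sharpSS k1 k2 k3 k4 l1 l2 l3 l4) Hss.e1 H4.u, (sharpSS k1 k2 k3 k4 l1 l2 l3 l4) Hss.e2 H4.u, (sharpSS k1 k2 k3 k4 l1 l2 l3 l4) Hss.e3 H4.u,
        (sharpSS k1 k2 k3 k4 l1 l2 l3 l4) 1 H4.w, (sharpSS k1 k2 k3 k4 l1 l2 l3 l4) Hss.e1 H4.w, (sharpSS k1 k2 k3 k4 l1 l2 l3 l4) Hss.e2 H4.w, (sharpSS k1 k2 k3 k4 l1 l2 l3 l4) Hss.e3 H4.w]) =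
      Submodule.span ℝ {x : Hss ⊗[ℝ] H4 | ∃ (a : Hss) (h : H4), x = (sharpSS k1 k2 k3 k4 l1 l2 l3 l4) a h} ∧
    Module.finrank ℝ
      (Submodule.span ℝ {x : Hss ⊗[ℝ] H4 | ∃ (a : Hss) (h : H4), x = (sharpSS k1 k2 k3 k4 l1 l2 l3 l4) a h}) = 8 := by
  have hinj := (sharpPair_leftInverse k1 k2 k3 k4 l1 l2 l3 l4).injective
  rw [← sharpPair_comp_pairBasis, ← range_sharpPair, Set.range_comp, Submodule.span_image,
    Hss.pairBasis.span_eq, Submodule.map_top, LinearMap.finrank_range_of_inj hinj,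
    Module.finrank_prod, QuaternionAlgebra.finrank_eq_four]
  exact ⟨Hss.pairBasis.linearIndependent.map' _ (LinearMap.ker_eq_bot.2 hinj), rfl, rfl⟩
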